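/- Let $u$ be a smooth solution of $\partial_t u = \mathcal{L}_\phi u$ on a closed manifold $M$ for $t \in [a,b]$ with $I(t) > 0$ on $[a,b]$. Then $I(b) \geq I(a)\, e^{2 U(a)(b-a)}$, where $U(a) = D(a)/I(a) \leq 0$. -/

import Mathlib

/-! `I' = 2D` and, by self-adjointness, `D' = 2∫ (𝓛_φ u)²`. Cauchy–Schwarz
`(∫ u 𝓛_φ u)² ≤ ∫ u² ∫ (𝓛_φ u)²` then makes `U = D / I` nondecreasing, so
`(log I)' = 2U ≥ 2U(a)` on `[a, b]`, and integrating gives the bound. -/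

open MeasureTheory Set
open scoped RealInnerProductSpace

theorem integral_mul_sq_le_integral_sq_mul_integral_sq {M : Type*} [MeasurableSpace M]
    {μ : Measure M} {f g : M → ℝ} (hf : Integrable (fun x => f x ^ 2) μ)
    (hg : Integrable (fun x => g x ^ 2) μ) (hfg : Integrable (fun x => f x * g x) μ) :
    (∫ x, f x * g x ∂μ) ^ 2 ≤ (∫ x, f x ^ 2 ∂μ) * ∫ x, g x ^ 2 ∂μ := by
  have hquad : ∀ l : ℝ, 0 ≤ (∫ x, f x ^ 2 ∂μ) * (l * l) + 2 * (∫ x, f x * g x ∂μ) * l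
      + ∫ x, g x ^ 2 ∂μ := fun l =>
    calc 0 ≤ ∫ x, (l * f x + g x) ^ 2 ∂μ := integral_nonneg fun x => sq_nonneg _
      _ = ∫ x, (l * l * f x ^ 2 + 2 * l * (f x * g x) + g x ^ 2) ∂μ := by
          congr with x; ring
      _ = _ := by
          have hf' := hf.const_mul (l * l)
          have hfg' := hfg.const_mul (2 * l)
          rw [integral_add (hf'.fun_add hfg') hg, integral_add hf' hfg', integral_const_mul,
            integral_const_mul]
          ring
  have := discrim_le_zero hquad
  rw [discrim] at this
  linarith

theorem Convex.monotoneOn_of_hasDerivAt_nonneg {s : Set ℝ} (hs : Convex ℝ s) {f f' : ℝ → ℝ}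
    (hf : ∀ x ∈ s, HasDerivAt f (f' x) x) (hf'₀ : ∀ x ∈ interior s, 0 ≤ f' x) :
    MonotoneOn f s :=
  monotoneOn_of_hasDerivWithinAt_nonneg hs
    (fun x hx => (hf x hx).continuousAt.continuousWithinAt)
    (fun x hx => (hf x (interior_subset hx)).hasDerivWithinAt) hf'₀

theorem Convex.monotoneOn_div_of_sq_le_mul {s : Set ℝ} (hs : Convex ℝ s) {I D E : ℝ → ℝ}
    (hI : ∀ t ∈ s, HasDerivAt I (2 * D t) t) (hD : ∀ t ∈ s, HasDerivAt D (2 * E t) t)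
    (hI₀ : ∀ t ∈ s, I t ≠ 0) (hDE : ∀ t ∈ s, D t ^ 2 ≤ I t * E t) :
    MonotoneOn (fun t => D t / I t) s :=
  hs.monotoneOn_of_hasDerivAt_nonneg (fun t ht => (hD t ht).div (hI t ht) (hI₀ t ht))
    fun t ht => by
      have := hDE t (interior_subset ht)
      exact div_nonneg (by nlinarith) (sq_nonneg _)

theorem mul_exp_le_of_le_div_of_hasDerivAt {I I' : ℝ → ℝ} {a b k : ℝ} (hab : a ≤ b)
    (hI : ∀ t ∈ Icc a b, HasDerivAt I (I' t) t) (hpos : ∀ t ∈ Icc a b, 0 < I t)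
    (hk : ∀ t ∈ Ioo a b, k ≤ I' t / I t) :
    I a * Real.exp (k * (b - a)) ≤ I b := by
  have hlog : MonotoneOn (fun t => Real.log (I t) - k * t) (Icc a b) :=
    (convex_Icc a b).monotoneOn_of_hasDerivAt_nonneg
      (fun t ht => ((hI t ht).log (hpos t ht).ne').sub ((hasDerivAt_id t).const_mul k))
      fun t ht => by
        rw [interior_Icc] at ht
        simpa using hk t ht
  have hab' := hlog (left_mem_Icc.2 hab) (right_mem_Icc.2 hab) hab
  calc I a * Real.exp (k * (b - a)) = Real.exp (Real.log (I a) + k * (b - a)) := by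
        rw [Real.exp_add, Real.exp_log (hpos a (left_mem_Icc.2 hab))]
    _ ≤ Real.exp (Real.log (I b)) := Real.exp_le_exp.2 (by simp only at hab'; linarith)
    _ = I b := Real.exp_log (hpos b (right_mem_Icc.2 hab))

theorem I_exponential_lower_bound_general
    {M : Type*} [MeasurableSpace M] (μ : Measure M)
    {V : Type*} [NormedAddCommGroup V] [InnerProductSpace ℝ V]
    (a b : ℝ) (hab : a ≤ b)
    (u Lu : ℝ → M → ℝ) (gradu gradLu : ℝ → M → V)
    (hu2 : ∀ t, Integrable (fun x => (u t x) ^ 2) μ)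
    (hLu2 : ∀ t, Integrable (fun x => (Lu t x) ^ 2) μ)
    (huLu : ∀ t, Integrable (fun x => u t x * Lu t x) μ)
    -- self-adjointness of 𝓛_φ (integration by parts on the closed manifold)
    (hibp : ∀ t, ∫ x, u t x * Lu t x ∂μ = -∫ x, ‖gradu t x‖ ^ 2 ∂μ)
    (hibp2 : ∀ t, ∫ x, ⟪gradu t x, gradLu t x⟫ ∂μ = -∫ x, (Lu t x) ^ 2 ∂μ)
    -- differentiation under the integral sign for I and D
    (hDI : ∀ t ∈ Set.Icc a b,
      HasDerivAt (fun s => ∫ x, (u s x) ^ 2 ∂μ)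
        (∫ x, 2 * (u t x * Lu t x) ∂μ) t)
    (hDD : ∀ t ∈ Set.Icc a b,
      HasDerivAt (fun s => -∫ x, ‖gradu s x‖ ^ 2 ∂μ)
        (-∫ x, 2 * ⟪gradu t x, gradLu t x⟫ ∂μ) t)
    -- positivity of I on [a,b]
    (hIpos : ∀ t ∈ Set.Icc a b, 0 < ∫ x, (u t x) ^ 2 ∂μ) :
    (∫ x, (u b x) ^ 2 ∂μ) ≥ (∫ x, (u a x) ^ 2 ∂μ) *
      Real.exp (2 * ((-∫ x, ‖gradu a x‖ ^ 2 ∂μ) / (∫ x, (u a x) ^ 2 ∂μ)) * (b - a)) := by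
  set I : ℝ → ℝ := fun t => ∫ x, u t x ^ 2 ∂μ
  set D : ℝ → ℝ := fun t => -∫ x, ‖gradu t x‖ ^ 2 ∂μ
  have hI : ∀ t ∈ Icc a b, HasDerivAt I (2 * D t) t := fun t ht => by
    simpa only [integral_const_mul, hibp] using hDI t ht
  have hD : ∀ t ∈ Icc a b, HasDerivAt D (2 * ∫ x, Lu t x ^ 2 ∂μ) t := fun t ht => by
    simpa only [integral_const_mul, hibp2, mul_neg, neg_neg] using hDD t ht
  have hDE : ∀ t ∈ Icc a b, D t ^ 2 ≤ I t * ∫ x, Lu t x ^ 2 ∂μ := fun t _ => by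
    simpa only [D, ← hibp] using
      integral_mul_sq_le_integral_sq_mul_integral_sq (hu2 t) (hLu2 t) (huLu t)
  have hU := (convex_Icc a b).monotoneOn_div_of_sq_le_mul hI hD (fun t ht => (hIpos t ht).ne') hDE
  refine mul_exp_le_of_le_div_of_hasDerivAt hab hI hIpos fun t ht => ?_
  rw [mul_div_assoc]
  exact mul_le_mul_of_nonneg_left
    (hU (left_mem_Icc.2 hab) (Ioo_subset_Icc_self ht) ht.1.le) zero_le_two

theorem I_exponential_lower_bound
    {M : Type*} [MeasurableSpace M] (μ : Measure M) [IsFiniteMeasure μ]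
    {V : Type*} [NormedAddCommGroup V] [InnerProductSpace ℝ V]
    (a b : ℝ) (hab : a ≤ b)
    (u Lu : ℝ → M → ℝ) (gradu gradLu : ℝ → M → V)
    (hu2 : ∀ t, Integrable (fun x => (u t x) ^ 2) μ)
    (hgrad2 : ∀ t, Integrable (fun x => ‖gradu t x‖ ^ 2) μ)
    (hLu2 : ∀ t, Integrable (fun x => (Lu t x) ^ 2) μ)
    (huLu : ∀ t, Integrable (fun x => u t x * Lu t x) μ)
    (hgg : ∀ t, Integrable (fun x => ⟪gradu t x, gradLu t x⟫) μ)
    -- the drift heat equation ∂ₜ u = 𝓛_φ u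
    (hheat : ∀ x t, HasDerivAt (fun s => u s x) (Lu t x) t)
    -- self-adjointness of 𝓛_φ (integration by parts on the closed manifold)
    (hibp : ∀ t, ∫ x, u t x * Lu t x ∂μ = -∫ x, ‖gradu t x‖ ^ 2 ∂μ)
    (hibp2 : ∀ t, ∫ x, ⟪gradu t x, gradLu t x⟫ ∂μ = -∫ x, (Lu t x) ^ 2 ∂μ)
    -- differentiation under the integral sign for I and D
    (hDI : ∀ t ∈ Set.Icc a b,
      HasDerivAt (fun s => ∫ x, (u s x) ^ 2 ∂μ)
        (∫ x, 2 * (u t x * Lu t x) ∂μ) t)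
    (hDD : ∀ t ∈ Set.Icc a b,
      HasDerivAt (fun s => -∫ x, ‖gradu s x‖ ^ 2 ∂μ)
        (-∫ x, 2 * ⟪gradu t x, gradLu t x⟫ ∂μ) t)
    -- positivity of I on [a,b]
    (hIpos : ∀ t ∈ Set.Icc a b, 0 < ∫ x, (u t x) ^ 2 ∂μ) :
    (∫ x, (u b x) ^ 2 ∂μ) ≥ (∫ x, (u a x) ^ 2 ∂μ) *
      Real.exp (2 * ((-∫ x, ‖gradu a x‖ ^ 2 ∂μ) / (∫ x, (u a x) ^ 2 ∂μ)) * (b - a)) :=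
  I_exponential_lower_bound_general μ a b hab u Lu gradu gradLu hu2 hLu2 huLu hibp hibp2 hDI hDD
    hIpos
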